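/- For n ≥ 3, every join-irreducible partition of n other than (2,1,1,…,1) has exactly one son that is a join-irreducible partition of n+1, and the partition (2,1,…,1) has exactly two sons that are join-irreducible partitions of n+1. -/

import Mathlib

def IsPartition (n : ℕ) (a : ℕ → ℕ) : Prop :=
  (∀ i j, i ≤ j → a j ≤ a i) ∧ (∑ i ∈ Finset.range n, a i = n) ∧ (∀ i, n ≤ i → a i = 0)

def Dom (a b : ℕ → ℕ) : Prop :=
  ∀ j, ∑ i ∈ Finset.range j, a i ≤ ∑ i ∈ Finset.range j, b i

def IsSupOf (n : ℕ) (a b c : ℕ → ℕ) : Prop :=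
  IsPartition n c ∧ Dom a c ∧ Dom b c ∧
    ∀ d, IsPartition n d → Dom a d → Dom b d → Dom c d

def IsInfOf (n : ℕ) (a b c : ℕ → ℕ) : Prop :=
  IsPartition n c ∧ Dom c a ∧ Dom c b ∧
    ∀ d, IsPartition n d → Dom d a → Dom d b → Dom d c

/-- The minimum partition (1,1,…,1) of n. -/
def ones (n : ℕ) : ℕ → ℕ := fun i => if i < n then 1 else 0

/-- A partition of n is join-irreducible in the dominance lattice: it is not
the minimum and whenever it is the join of two partitions it equals one of them. -/
def JoinIrr (n : ℕ) (a : ℕ → ℕ) : Prop :=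
  IsPartition n a ∧ a ≠ ones n ∧
    ∀ b c, IsPartition n b → IsPartition n c → IsSupOf n b c a → a = b ∨ a = c
def downAt (i : ℕ) (a : ℕ → ℕ) : ℕ → ℕ := fun j => if j = i then a j + 1 else a j

/-- Remove one grain from the first column. -/
def dec1 (a : ℕ → ℕ) : ℕ → ℕ := fun i => if i = 0 then a 0 - 1 else a i

/-- Slippery plateau at the first column, of length l ≥ 1 (0-based entries):
entries 0..l are equal and the height difference at position l is 1. -/
def SlipperyPlateau1 (a : ℕ → ℕ) (l : ℕ) : Prop :=
  1 ≤ l ∧ (∀ i ≤ l, a i = a 0) ∧ a l = a (l + 1) + 1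

/-- Non-slippery plateau at the first column: a plateau of length ≥ 1 ending at a cliff. -/
def NonSlipperyPlateau1 (a : ℕ → ℕ) : Prop :=
  ∃ k, 1 ≤ k ∧ (∀ i ≤ k, a i = a 0) ∧ a (k + 1) + 2 ≤ a k

/-- Slippery step at the first column. -/
def SlipperyStep1 (a : ℕ → ℕ) : Prop := ∃ l, SlipperyPlateau1 (dec1 a) l

/-- Non-slippery step at the first column. -/
def NonSlipperyStep1 (a : ℕ → ℕ) : Prop := NonSlipperyPlateau1 (dec1 a)

/-- b is a son of the partition a of n: either the left son α↓₁, or the right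
son α↓₂ (for a step at 1), or α↓_{l+2} (for a slippery plateau of length l at 1). -/
def Son (n : ℕ) (a b : ℕ → ℕ) : Prop :=
  IsPartition n a ∧ IsPartition (n + 1) b ∧
    (b = downAt 0 a ∨
     ((SlipperyStep1 a ∨ NonSlipperyStep1 a) ∧ b = downAt 1 a) ∨
     (∃ l, SlipperyPlateau1 a l ∧ b = downAt (l + 1) a))

/-- The partition (2,1,…,1) of n. -/
def twoOnes (n : ℕ) : ℕ → ℕ := fun i => if i = 0 then 2 else if i < n - 1 then 1 else 0

/-!
The join-irreducible partitions of `n` in the dominance order are exactly the partitions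
`(c^m, (c-1)^r, 1^s)` with `c ≥ 2`, `m ≥ 1`, `c ≥ 3` if `r ≥ 1`, and `c ≥ 4` if also `s ≥ 1`.
Moving a grain from the end of a plateau to a lower column goes down in the dominance order and
lowers the partial sums by one exactly on an interval, its dip. Two moves with disjoint dips, or
with dips meeting in one column where the partition drops by one, present it as their join; this
rules out every other shape. For the listed shapes, a smaller partition whose partial sums agree
with those of `a` at one column of the dip of a suitable move is `a` itself, so this move is the
unique lower cover.

If the first descent of `α` is at the (0-based) column `m`, its sons are the left son `α↓₁` and,
exactly when that descent is by one, `downAt m α`. Comparing both with the characterization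
leaves exactly one join-irreducible son, except for `(2, 1^(n-2))`, where both are.
-/

open Finset

lemma sum_range_add_of_eq_const {f : ℕ → ℕ} {k u v : ℕ} (h : ∀ x < u, f (k + x) = v) :
    ∑ i ∈ range (k + u), f i = ∑ i ∈ range k, f i + u * v := by
  rw [sum_range_add, sum_congr rfl fun x hx => h x (mem_range.1 hx), sum_const, card_range,
    smul_eq_mul]

lemma Dom.antisymm {a b : ℕ → ℕ} (hab : Dom a b) (hba : Dom b a) : a = b := by
  funext i
  have h := le_antisymm (hab (i + 1)) (hba (i + 1))
  have h' := le_antisymm (hab i) (hba i)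
  rw [sum_range_succ, sum_range_succ] at h
  omega

section Threshold
variable {a : ℕ → ℕ} {N : ℕ}

lemma Antitone.exists_le_iff_lt (ha : Antitone a) (hN : a N = 0) {v : ℕ} (hv : 0 < v) :
    ∃ k, ∀ i, v ≤ a i ↔ i < k := by
  classical
  have hex : ∃ i, a i < v := ⟨N, by omega⟩
  refine ⟨Nat.find hex, fun i => ⟨fun hi => ?_, fun hi => not_lt.1 (Nat.find_min hex hi)⟩⟩
  by_contra hk
  have := ha (not_lt.1 hk)
  have := Nat.find_spec hex
  omega

lemma Antitone.exists_plateau_end (ha : Antitone a) (hN : a N = 0) {p : ℕ} (hp : 0 < a p) :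
    ∃ i, p ≤ i ∧ a i = a p ∧ a (i + 1) < a p := by
  obtain ⟨k, hk⟩ := ha.exists_le_iff_lt hN hp
  have hpk := (hk p).1 le_rfl
  refine ⟨k - 1, by omega, le_antisymm (ha (by omega)) ((hk _).2 (by omega)), ?_⟩
  have := hk k
  rw [Nat.sub_add_cancel (by omega)]
  omega

end Threshold

section Partition
variable {n : ℕ} {a : ℕ → ℕ}

lemma IsPartition.antitone (ha : IsPartition n a) : Antitone a := ha.1

lemma IsPartition.apply_self (ha : IsPartition n a) : a n = 0 := ha.2.2 n le_rfl

lemma IsPartition.sum_range_of_le (ha : IsPartition n a) {t : ℕ} (ht : n ≤ t) :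
    ∑ i ∈ range t, a i = n := by
  rw [← ha.2.1]
  exact (sum_subset (range_subset_range.2 ht) fun x _ hx => ha.2.2 x (by simpa using hx)).symm

lemma IsPartition.sum_range_le (ha : IsPartition n a) (t : ℕ) : ∑ i ∈ range t, a i ≤ n := by
  rw [← ha.sum_range_of_le (le_max_right t n)]
  exact sum_le_sum_of_subset (range_subset_range.2 (le_max_left t n))

lemma IsPartition.sum_range_of_apply_eq_zero (ha : IsPartition n a) {j : ℕ} (hj : a j = 0) :
    ∑ i ∈ range j, a i = n := by
  rw [← ha.sum_range_of_le (le_max_right j n), ← Nat.add_sub_cancel' (le_max_left j n),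
    sum_range_add_of_eq_const (v := 0) fun x _ => ?_]
  · simp
  · have := ha.antitone (Nat.le_add_right j x)
    omega

lemma IsPartition.apply_eq_zero_of_sum_range (ha : IsPartition n a) {k : ℕ}
    (hk : ∑ i ∈ range k, a i = n) {i : ℕ} (hi : k ≤ i) : a i = 0 := by
  obtain ⟨j, rfl⟩ := Nat.exists_eq_add_of_le hi
  have h := ha.sum_range_le (k + j + 1)
  rw [sum_range_succ, sum_range_add, hk] at h
  omega

lemma IsPartition.apply_pred_eq_zero (ha : IsPartition n a) {i : ℕ} (hi : 2 ≤ a i) :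
    a (n - 1) = 0 := by
  by_contra h
  have hin : i < n := by
    by_contra h'
    have := ha.2.2 i (by omega)
    omega
  have hpos : ∀ x ∈ range n, 1 ≤ a x := fun x hx =>
    (Nat.one_le_iff_ne_zero.2 h).trans (ha.antitone (by simp at hx; omega))
  have := sum_lt_sum hpos ⟨i, mem_range.2 hin, by omega⟩
  simp [ha.2.1] at this

end Partition

def moveGrain (i j : ℕ) (a : ℕ → ℕ) : ℕ → ℕ :=
  fun t => if t = i then a i - 1 else if t = j then a j + 1 else a t

/-- The conditions under which moving a grain from column `i` to column `j` of a partition gives a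
partition strictly below it in the dominance order. -/
structure CanMove (i j : ℕ) (a : ℕ → ℕ) : Prop where
  lt : i < j
  src : a (i + 1) < a i
  tgt : a j < a (j - 1)
  gap : a j + 2 ≤ a i

section Move
variable {n i j : ℕ} {a : ℕ → ℕ}

lemma CanMove.sum_range_moveGrain (h : CanMove i j a) (t : ℕ) :
    ∑ x ∈ range t, moveGrain i j a x + (if i < t ∧ t ≤ j then 1 else 0) =
      ∑ x ∈ range t, a x := by
  have := h.lt
  have := h.gap
  have hpt : ∀ x,
      moveGrain i j a x + (if x = i then 1 else 0) = a x + (if x = j then 1 else 0) := fun x => by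
    simp only [moveGrain]
    split_ifs <;> subst_vars <;> omega
  have hsum : ∑ x ∈ range t, (moveGrain i j a x + if x = i then 1 else 0) =
      ∑ x ∈ range t, (a x + if x = j then 1 else 0) := sum_congr rfl fun x _ => hpt x
  simp only [sum_add_distrib, sum_ite_eq', mem_range] at hsum
  split_ifs at hsum ⊢ <;> omega

lemma CanMove.dom (h : CanMove i j a) : Dom (moveGrain i j a) a := fun t => by
  have := h.sum_range_moveGrain t
  omega

lemma CanMove.sum_range_eq (h : CanMove i j a) {t : ℕ} (ht : ¬ (i < t ∧ t ≤ j)) :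
    ∑ x ∈ range t, moveGrain i j a x = ∑ x ∈ range t, a x := by
  simpa [ht] using h.sum_range_moveGrain t

lemma CanMove.moveGrain_ne (h : CanMove i j a) : moveGrain i j a ≠ a := fun he => by
  have hs := h.sum_range_moveGrain j
  rw [he, if_pos ⟨h.lt, le_rfl⟩] at hs
  omega

lemma CanMove.isPartition (ha : IsPartition n a) (h : CanMove i j a) :
    IsPartition n (moveGrain i j a) := by
  have hsum := h.sum_range_moveGrain n
  obtain ⟨hij, hsrc, htgt, hgap⟩ := h
  have hn := ha.apply_pred_eq_zero (i := i) (by omega)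
  have hjn : j < n := by
    by_contra hjn
    have := ha.antitone (show n - 1 ≤ j - 1 by omega)
    omega
  refine ⟨antitone_nat_of_succ_le fun t => ?_, ?_, fun t ht => ?_⟩
  · have := ha.antitone (Nat.le_add_right t 1)
    simp only [moveGrain]
    split_ifs <;> subst_vars <;> (try simp only [add_tsub_cancel_right] at *) <;> omega
  · simpa [show ¬ (i < n ∧ n ≤ j) by omega, ha.2.1] using hsum
  · simp only [moveGrain, if_neg (show t ≠ i by omega), if_neg (show t ≠ j by omega)]
    exact ha.2.2 t ht

lemma CanMove.le_sum_range (h : CanMove i j a) {d : ℕ → ℕ} (hd : Dom (moveGrain i j a) d)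
    {t : ℕ} (ht : ¬ (i < t ∧ t ≤ j)) : ∑ x ∈ range t, a x ≤ ∑ x ∈ range t, d x :=
  h.sum_range_eq ht ▸ hd t

lemma not_joinIrr_of_moveGrain {i₁ j₁ i₂ j₂ : ℕ} (h₁ : CanMove i₁ j₁ a) (h₂ : CanMove i₂ j₂ a)
    (hsup : ∀ d, IsPartition n d → Dom (moveGrain i₁ j₁ a) d → Dom (moveGrain i₂ j₂ a) d →
      Dom a d) :
    ¬ JoinIrr n a := fun ⟨ha, _, hirr⟩ => by
  rcases hirr _ _ (h₁.isPartition ha) (h₂.isPartition ha) ⟨ha, h₁.dom, h₂.dom, hsup⟩ with he | he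
  · exact h₁.moveGrain_ne he.symm
  · exact h₂.moveGrain_ne he.symm

lemma not_joinIrr_of_disjoint {i₁ j₁ i₂ j₂ : ℕ} (h₁ : CanMove i₁ j₁ a) (h₂ : CanMove i₂ j₂ a)
    (hj : j₁ ≤ i₂) : ¬ JoinIrr n a :=
  not_joinIrr_of_moveGrain h₁ h₂ fun d _ hd₁ hd₂ t => by
    by_cases ht : i₁ < t ∧ t ≤ j₁
    · exact h₂.le_sum_range hd₂ (by omega)
    · exact h₁.le_sum_range hd₁ ht

/-- Here the dips of the two moves share the column `j₁`; the concavity of the partial sums of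
`d` closes the gap there, because `a` drops by exactly one at `j₁`. -/
lemma not_joinIrr_of_adjacent {i₁ j₁ i₂ j₂ : ℕ} (h₁ : CanMove i₁ j₁ a) (h₂ : CanMove i₂ j₂ a)
    (hj : i₂ + 1 = j₁) (hdrop : a j₁ + 1 = a i₂) : ¬ JoinIrr n a :=
  not_joinIrr_of_moveGrain h₁ h₂ fun d hd hd₁ hd₂ => by
    subst hj
    have key : ∀ t ≠ i₂ + 1, ∑ x ∈ range t, a x ≤ ∑ x ∈ range t, d x := fun t ht => by
      by_cases ht' : i₁ < t ∧ t ≤ i₂ + 1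
      · exact h₂.le_sum_range hd₂ (by omega)
      · exact h₁.le_sum_range hd₁ ht'
    intro t
    by_cases ht : t = i₂ + 1
    · subst ht
      have hlo := key i₂ (by omega)
      have hhi := key (i₂ + 2) (by omega)
      have hconc := hd.antitone (Nat.le_add_right i₂ 1)
      simp only [sum_range_succ] at hlo hhi ⊢
      omega
    · exact key t ht

lemma joinIrr_of_canMove (ha : IsPartition n a) (h : CanMove i j a)
    (hrigid : ∀ d, IsPartition n d → Dom d a → ∀ t, i < t → t ≤ j →
      ∑ x ∈ range t, d x = ∑ x ∈ range t, a x → d = a) :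
    JoinIrr n a := by
  have hbelow : ∀ d, IsPartition n d → Dom d a → d ≠ a → Dom d (moveGrain i j a) :=
    fun d hd hda hne t => by
      have hs := h.sum_range_moveGrain t
      have := hda t
      split_ifs at hs with ht
      · have : ∑ x ∈ range t, d x ≠ ∑ x ∈ range t, a x := fun he =>
          hne (hrigid d hd hda t ht.1 ht.2 he)
        omega
      · omega
  refine ⟨ha, fun he => ?_, fun b c hb hc hsup => ?_⟩
  · have := h.gap
    have := congrFun he i
    simp only [ones] at this
    split_ifs at this <;> omega
  · by_contra hbc
    rw [not_or] at hbc
    exact h.moveGrain_ne (Dom.antisymm h.dom (hsup.2.2.2 _ (h.isPartition ha)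
      (hbelow b hb hsup.2.1 (Ne.symm hbc.1)) (hbelow c hc hsup.2.2.1 (Ne.symm hbc.2))))

end Move

lemma Antitone.exists_canMove {a : ℕ → ℕ} {N i : ℕ} (ha : Antitone a) (hN : a N = 0)
    (hi : a (i + 1) < a i) (h2 : 2 ≤ a i) : ∃ j, CanMove i j a ∧ ∀ k < j, a i < a k + 2 := by
  obtain ⟨j, hj⟩ := ha.exists_le_iff_lt hN (v := a i - 1) (by omega)
  have hij : i < j := (hj i).1 (by omega)
  have hj₁ := (hj (j - 1)).2 (by omega)
  have hj₂ := hj j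
  exact ⟨j, ⟨hij, hi, by omega, by omega⟩, fun k hk => by have := (hj k).2 hk; omega⟩

section JoinIrr
variable {n : ℕ} {a : ℕ → ℕ}

lemma JoinIrr.two_le_apply_zero (h : JoinIrr n a) : 2 ≤ a 0 := by
  by_contra h2
  refine h.2.1 (funext fun i => ?_)
  have hle : ∀ x ∈ range n, a x ≤ 1 := fun x _ => (h.1.antitone (Nat.zero_le x)).trans (by omega)
  have heq := (sum_eq_sum_iff_of_le hle).1 (by simp [h.1.2.1])
  simp only [ones]
  split_ifs with hi
  · exact heq i (mem_range.2 hi)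
  · exact h.1.2.2 i (not_lt.1 hi)

/-- Otherwise the move from the end of the top plateau down to the first column of height at most
`a 0 - 2`, and the move from the end of the plateau of that column, are disjoint. -/
theorem JoinIrr.apply_zero_le_add_one (h : JoinIrr n a) {p : ℕ} (hp : 2 ≤ a p) :
    a 0 ≤ a p + 1 := by
  by_contra hlt
  have ha := h.1.antitone
  have hN := h.1.apply_self
  obtain ⟨i₁, -, hi₁, hd₁⟩ := ha.exists_plateau_end hN (p := 0) (by omega)
  obtain ⟨j₁, hm₁, hmin⟩ := ha.exists_canMove hN (i := i₁) (by omega) (by omega)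
  have hpj : j₁ ≤ p := by
    by_contra
    have := hmin p (by omega)
    omega
  have := ha hpj
  obtain ⟨i₂, hji, hi₂, hd₂⟩ := ha.exists_plateau_end hN (p := j₁) (by omega)
  obtain ⟨j₂, hm₂, -⟩ := ha.exists_canMove hN (i := i₂) (by omega) (by omega)
  exact not_joinIrr_of_disjoint hm₁ hm₂ hji h

end JoinIrr

/-- The partition `(c^m, (c-1)^r, 1^s)`. -/
def blocks (c m r s : ℕ) : ℕ → ℕ := fun i =>
  if i < m then c else if i < m + r then c - 1 else if i < m + r + s then 1 else 0

section Blocks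
variable {n c m r s : ℕ}

lemma blocks_two_eq {r' s' : ℕ} (h : r + s = r' + s') : blocks 2 m r s = blocks 2 m r' s' := by
  funext i
  simp only [blocks]
  split_ifs <;> omega

lemma blocks_antitone (hc : 2 ≤ c) : Antitone (blocks c m r s) := fun i j hij => by
  simp only [blocks]
  split_ifs <;> omega

lemma sum_range_blocks_of_le {t : ℕ} (ht : t ≤ m) :
    ∑ i ∈ range t, blocks c m r s i = c * t := by
  have h : ∀ i ∈ range t, blocks c m r s i = c := fun i hi =>
    if_pos ((mem_range.1 hi).trans_le ht)
  rw [sum_congr rfl h, sum_const, card_range, smul_eq_mul, mul_comm]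

lemma sum_range_blocks_add_mid {u : ℕ} (hu : u ≤ r) :
    ∑ i ∈ range (m + u), blocks c m r s i = c * m + (c - 1) * u := by
  rw [sum_range_add_of_eq_const (v := c - 1) fun x hx => ?_, sum_range_blocks_of_le le_rfl,
    mul_comm u]
  simp only [blocks]
  split_ifs <;> omega

lemma sum_range_blocks_add_tail {u : ℕ} (hu : u ≤ s) :
    ∑ i ∈ range (m + r + u), blocks c m r s i = c * m + (c - 1) * r + u := by
  rw [sum_range_add_of_eq_const (v := 1) fun x hx => ?_, sum_range_blocks_add_mid le_rfl,
    mul_one]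
  simp only [blocks]
  split_ifs <;> omega

lemma sum_range_blocks_of_add_le {t : ℕ} (ht : m + r + s ≤ t) :
    ∑ i ∈ range t, blocks c m r s i = c * m + (c - 1) * r + s := by
  obtain ⟨u, rfl⟩ := Nat.exists_eq_add_of_le ht
  rw [sum_range_add_of_eq_const (v := 0) fun x hx => ?_, sum_range_blocks_add_tail le_rfl,
    mul_zero, add_zero]
  simp only [blocks]
  split_ifs <;> omega

lemma isPartition_blocks_iff (hc : 2 ≤ c) :
    IsPartition n (blocks c m r s) ↔ c * m + (c - 1) * r + s = n := by
  refine ⟨fun h => ?_, fun hn => ?_⟩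
  · rw [← sum_range_blocks_of_add_le (le_max_left (m + r + s) n),
      h.sum_range_of_le (le_max_right _ _)]
  · have hm := Nat.le_mul_of_pos_left m (show 0 < c by omega)
    have hr := Nat.le_mul_of_pos_left r (show 0 < c - 1 by omega)
    refine ⟨blocks_antitone hc, (sum_range_blocks_of_add_le (by omega)).trans hn, fun i hi => ?_⟩
    simp only [blocks]
    split_ifs <;> omega

section Rigidity
variable {d : ℕ → ℕ}

lemma apply_eq_blocks_of_lt (hc : 0 < c) (hm : 1 ≤ m) (hd : IsPartition n d)
    (hdom : Dom d (blocks c m r s))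
    (heq : ∑ i ∈ range (m + r), d i = ∑ i ∈ range (m + r), blocks c m r s i)
    {i : ℕ} (hi : i < m + r) : d i = blocks c m r s i := by
  rw [sum_range_blocks_add_mid le_rfl, sum_range_add] at heq
  have hle : ∀ i, d i ≤ c := fun i => by
    have h := hdom 1
    simp only [sum_range_one, blocks, if_pos (show 0 < m by omega)] at h
    exact (hd.antitone (Nat.zero_le i)).trans h
  -- Otherwise the first `m + 1` parts of `d` would exceed `c * m + (c - 1)`.
  have hdm : r = 0 ∨ d m + 1 ≤ c := by
    by_contra! h
    have h1 := hdom (m + 1)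
    have hlow := card_nsmul_le_sum (range m) (fun i => d i) c fun i hi => by
      have := hd.antitone (mem_range.1 hi).le
      omega
    rw [sum_range_blocks_add_mid (u := 1) (by omega), sum_range_succ, mul_one] at h1
    rw [card_range, smul_eq_mul, mul_comm] at hlow
    omega
  have hmid_le : ∀ x ∈ range r, d (m + x) ≤ c - 1 := fun x hx => by
    have := hd.antitone (Nat.le_add_right m x)
    simp only [mem_range] at hx
    omega
  have hmid_sum := sum_le_card_nsmul (range r) (fun x => d (m + x)) (c - 1) hmid_le
  have hhead := hdom m
  rw [sum_range_blocks_of_le le_rfl] at hhead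
  rw [card_range, smul_eq_mul, mul_comm] at hmid_sum
  have hleft := (sum_eq_sum_iff_of_le (s := range m) (g := fun _ => c) fun i _ => hle i).1
    (by rw [sum_const, card_range, smul_eq_mul, mul_comm]; omega)
  have hmid := (sum_eq_sum_iff_of_le (g := fun _ => c - 1) hmid_le).1
    (by rw [sum_const, card_range, smul_eq_mul, mul_comm]; omega)
  simp only [blocks]
  split_ifs with h1
  · exact hleft i (mem_range.2 h1)
  · simpa [Nat.add_sub_cancel' (not_lt.1 h1)] using hmid (i - m) (mem_range.2 (by omega))

lemma apply_eq_blocks_of_le (hn : c * m + (c - 1) * r + s = n) (hd : IsPartition n d)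
    (hdom : Dom d (blocks c m r s))
    (heq : ∑ i ∈ range (m + r), d i = ∑ i ∈ range (m + r), blocks c m r s i)
    {i : ℕ} (hi : m + r ≤ i) : d i = blocks c m r s i := by
  rw [sum_range_blocks_add_mid le_rfl] at heq
  have hone : ∀ x < s, d (m + r + x) = 1 := fun x hx => by
    have h1 := hdom (m + r + 1)
    rw [sum_range_blocks_add_tail (by omega), sum_range_succ, heq] at h1
    have := hd.antitone (Nat.le_add_right (m + r) x)
    by_contra hne
    have hsum := hd.sum_range_of_apply_eq_zero (show d (m + r + x) = 0 by omega)
    have := hdom (m + r + x)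
    rw [sum_range_blocks_add_tail hx.le] at this
    omega
  have hsum : ∑ x ∈ range (m + r + s), d x = n := by
    rw [sum_range_add_of_eq_const hone, heq]
    omega
  obtain ⟨x, rfl⟩ := Nat.exists_eq_add_of_le hi
  simp only [blocks]
  split_ifs
  · omega
  · omega
  · exact hone x (by omega)
  · exact hd.apply_eq_zero_of_sum_range hsum (by omega)

theorem eq_blocks_of_dom (hc : 0 < c) (hm : 1 ≤ m) (hn : c * m + (c - 1) * r + s = n)
    (hd : IsPartition n d)
    (hdom : Dom d (blocks c m r s))
    (heq : ∑ i ∈ range (m + r), d i = ∑ i ∈ range (m + r), blocks c m r s i) :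
    d = blocks c m r s :=
  funext fun i =>
    if hi : i < m + r then apply_eq_blocks_of_lt hc hm hd hdom heq hi
    else apply_eq_blocks_of_le hn hd hdom heq (not_lt.1 hi)

end Rigidity

end Blocks

section BlocksJoinIrr
variable {n c m r s : ℕ}

theorem joinIrr_blocks (hc : 2 ≤ c) (hm : 1 ≤ m) (hr : 1 ≤ r → 3 ≤ c)
    (hrs : 1 ≤ r → 1 ≤ s → 4 ≤ c) (hn : c * m + (c - 1) * r + s = n) :
    JoinIrr n (blocks c m r s) := by
  have hP := (isPartition_blocks_iff hc).2 hn
  by_cases h2 : c = 2 ∧ r = 0 ∧ 1 ≤ s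
  · obtain ⟨rfl, rfl, hs⟩ := h2
    -- `blocks 2 m 0 s` is also `blocks 2 m (t - m) (m + s - t)`, so rigidity applies at any `t`
    -- of the dip.
    have hmove : CanMove (m - 1) (m + s) (blocks 2 m 0 s) := by
      refine ⟨by omega, ?_, ?_, ?_⟩ <;> simp only [blocks] <;> split_ifs <;> omega
    refine joinIrr_of_canMove hP hmove fun d hd hdom t ht₁ ht₂ heq => ?_
    rw [blocks_two_eq (r' := t - m) (s' := m + s - t) (by omega)] at hdom heq ⊢
    exact eq_blocks_of_dom (by omega) hm (by omega) hd hdom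
      (by rwa [Nat.add_sub_cancel' (by omega : m ≤ t)])
  · have hmove : CanMove (m + r - 1) (m + r) (blocks c m r s) := by
      refine ⟨by omega, ?_, ?_, ?_⟩ <;> simp only [blocks] <;> split_ifs <;> omega
    refine joinIrr_of_canMove hP hmove fun d hd hdom t ht₁ ht₂ heq => ?_
    obtain rfl : t = m + r := by omega
    exact eq_blocks_of_dom (by omega) hm hn hd hdom heq

lemma not_joinIrr_blocks_three (hm : 1 ≤ m) (hr : 1 ≤ r) (hs : 1 ≤ s) :
    ¬ JoinIrr n (blocks 3 m r s) := by
  have h₁ : CanMove (m - 1) (m + r) (blocks 3 m r s) := by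
    refine ⟨by omega, ?_, ?_, ?_⟩ <;> simp only [blocks] <;> split_ifs <;> omega
  have h₂ : CanMove (m + r - 1) (m + r + s) (blocks 3 m r s) := by
    refine ⟨by omega, ?_, ?_, ?_⟩ <;> simp only [blocks] <;> split_ifs <;> omega
  exact not_joinIrr_of_adjacent h₁ h₂ (by omega) (by simp only [blocks]; split_ifs <;> omega)

end BlocksJoinIrr

section Characterization
variable {n c : ℕ} {a : ℕ → ℕ}

lemma IsPartition.exists_eq_blocks (ha : IsPartition n a) (h0 : a 0 = c) (hc : 2 ≤ c)
    (hval : ∀ i, 2 ≤ a i → c ≤ a i + 1) : ∃ m r s, 1 ≤ m ∧ a = blocks c m r s := by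
  have hA := ha.antitone
  have hN := ha.apply_self
  -- `k₁`, `k₂`, `k₃` count the parts of size at least `1`, `c - 1`, `c`.
  obtain ⟨k₁, hk₁⟩ := hA.exists_le_iff_lt hN (v := 1) one_pos
  obtain ⟨k₂, hk₂⟩ := hA.exists_le_iff_lt hN (v := c - 1) (by omega)
  obtain ⟨k₃, hk₃⟩ := hA.exists_le_iff_lt hN (v := c) (by omega)
  have h₃₂ : k₃ ≤ k₂ := by
    have := hk₃ k₂
    have := hk₂ k₂
    omega
  have h₂₁ : k₂ ≤ k₁ := by
    have := hk₂ k₁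
    have := hk₁ k₁
    omega
  refine ⟨k₃, k₂ - k₃, k₁ - k₂, (hk₃ 0).1 h0.ge, funext fun i => ?_⟩
  have := hk₁ i
  have := hk₂ i
  have := hk₃ i
  have := hval i
  have := hA (Nat.zero_le i)
  simp only [blocks]
  split_ifs <;> omega

theorem JoinIrr.exists_blocks (h : JoinIrr n a) :
    ∃ c m r s, 2 ≤ c ∧ 1 ≤ m ∧ (1 ≤ r → 3 ≤ c) ∧ (1 ≤ r → 1 ≤ s → 4 ≤ c) ∧
      c * m + (c - 1) * r + s = n ∧ a = blocks c m r s := by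
  obtain ⟨c, h0⟩ : ∃ c, a 0 = c := ⟨_, rfl⟩
  have hc := h0 ▸ h.two_le_apply_zero
  obtain ⟨m, r, s, hm, rfl⟩ :=
    h.1.exists_eq_blocks h0 hc fun i => h0 ▸ h.apply_zero_le_add_one
  have hn := (isPartition_blocks_iff hc).1 h.1
  rcases eq_or_lt_of_le hc with rfl | hc₃
  · exact ⟨2, m, 0, r + s, le_rfl, hm, by omega, by omega, by omega, blocks_two_eq (by omega)⟩
  · refine ⟨c, m, r, s, hc, hm, fun _ => hc₃, fun hr hs => ?_, hn, rfl⟩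
    by_contra hc₄
    obtain rfl : c = 3 := by omega
    exact not_joinIrr_blocks_three hm hr hs h

end Characterization

section Sons
variable {n m : ℕ} {a b : ℕ → ℕ}

lemma isPartition_downAt (ha : IsPartition n a) {j : ℕ} (hj : j = 0 ∨ a j < a (j - 1)) :
    IsPartition (n + 1) (downAt j a) := by
  have hjn : j ≤ n := by
    rcases hj with rfl | hj
    · omega
    · by_contra
      have := ha.2.2 (j - 1) (by omega)
      omega
  have hval : ∀ t, downAt j a t = a t + if t = j then 1 else 0 := fun t => by
    simp only [downAt]
    split_ifs <;> rfl
  refine ⟨antitone_nat_of_succ_le fun t => ?_, ?_, fun t ht => ?_⟩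
  · have := ha.antitone (Nat.le_add_right t 1)
    simp only [hval]
    split_ifs <;> subst_vars <;> (try simp only [add_tsub_cancel_right] at *) <;> omega
  · simp only [hval, sum_add_distrib, sum_ite_eq', mem_range, ha.sum_range_of_le (Nat.le_succ n)]
    simp [show j < n + 1 by omega]
  · rw [hval, if_neg (by omega), ha.2.2 t (by omega)]

lemma son_downAt_zero (ha : IsPartition n a) : Son n a (downAt 0 a) :=
  ⟨ha, isPartition_downAt ha (Or.inl rfl), Or.inl rfl⟩

lemma slipperyStep1_or_nonSlipperyStep1 (ha : IsPartition n a) (h1 : a 1 + 1 = a 0) (hpos : 0 < a 1) :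
    SlipperyStep1 a ∨ NonSlipperyStep1 a := by
  have h0 : dec1 a 0 = a 0 - 1 := if_pos rfl
  have hi : ∀ i ≠ 0, dec1 a i = a i := fun i hi => if_neg hi
  have hA : Antitone (dec1 a) := antitone_nat_of_succ_le fun t => by
    rcases t with _ | t
    · rw [h0, hi 1 one_ne_zero]
      omega
    · rw [hi _ t.succ_ne_zero, hi _ (t + 1).succ_ne_zero]
      exact ha.antitone (Nat.le_add_right _ 1)
  obtain ⟨k, hk, hkv, hkd⟩ := hA.exists_plateau_end (p := 1)
    (by rw [hi n (by have := ha.2.2 0; omega), ha.apply_self]) (by rw [hi 1 one_ne_zero]; omega)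
  have hpl : ∀ i ≤ k, dec1 a i = dec1 a 0 := fun i hik => by
    have := hA hik
    have := hA (Nat.zero_le i)
    rw [h0, hi 1 one_ne_zero] at *
    omega
  by_cases hs : dec1 a k = dec1 a (k + 1) + 1
  · exact Or.inl ⟨k, hk, hpl, hs⟩
  · exact Or.inr ⟨k, hk, hpl, by omega⟩

lemma son_downAt_of_plateau (ha : IsPartition n a) (hm : 1 ≤ m) (hpl : ∀ i < m, a i = a 0)
    (hdrop : a m + 1 = a 0) (hpos : 0 < a m) : Son n a (downAt m a) := by
  refine ⟨ha, isPartition_downAt ha (Or.inr (by rw [hpl (m - 1) (by omega)]; omega)), Or.inr ?_⟩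
  rcases eq_or_lt_of_le hm with rfl | hm₂
  · exact Or.inl ⟨slipperyStep1_or_nonSlipperyStep1 ha hdrop hpos, rfl⟩
  · obtain ⟨l, rfl⟩ := Nat.exists_eq_add_of_le' hm
    refine Or.inr ⟨l, ⟨by omega, fun i hi => hpl i (by omega), ?_⟩, rfl⟩
    rw [hpl l (by omega)]
    omega

lemma Son.eq_downAt (h : Son n a b) :
    b = downAt 0 a ∨
      ∃ m, 1 ≤ m ∧ (∀ i < m, a i = a 0) ∧ a m + 1 = a 0 ∧ b = downAt m a := by
  obtain ⟨-, -, hb | ⟨hstep, hb⟩ | ⟨l, ⟨hl, hpl, hdrop⟩, hb⟩⟩ := h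
  · exact Or.inl hb
  · have h01 : dec1 a 1 = dec1 a 0 ∧ 1 ≤ dec1 a 0 := by
      rcases hstep with ⟨k, hk, hpl, hdrop⟩ | ⟨k, hk, hpl, hdrop⟩
      · exact ⟨hpl 1 hk, by have := hpl k le_rfl; omega⟩
      · exact ⟨hpl 1 hk, by have := hpl k le_rfl; omega⟩
    simp only [dec1, one_ne_zero, if_false, if_true] at h01
    refine Or.inr ⟨1, le_rfl, fun i hi => by rw [Nat.lt_one_iff.1 hi], by omega, hb⟩
  · refine Or.inr ⟨l + 1, by omega, fun i hi => hpl i (by omega), ?_, hb⟩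
    rw [← hpl l le_rfl]
    omega

end Sons

section BlocksSons
variable {n c m r s : ℕ}

lemma twoOnes_eq_blocks (hn : 2 ≤ n) : twoOnes n = blocks 2 1 0 (n - 2) := by
  funext i
  simp only [twoOnes, blocks]
  split_ifs <;> omega

lemma downAt_zero_blocks (hm : 1 ≤ m) : downAt 0 (blocks c m 0 s) = blocks (c + 1) 1 (m - 1) s := by
  funext i
  simp only [downAt, blocks]
  split_ifs <;> omega

lemma downAt_blocks (hc : 1 ≤ c) (hr : 1 ≤ r) :
    downAt m (blocks c m r s) = blocks c (m + 1) (r - 1) s := by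
  funext i
  simp only [downAt, blocks]
  split_ifs <;> omega

lemma downAt_blocks_two (hs : 1 ≤ s) : downAt m (blocks 2 m 0 s) = blocks 2 (m + 1) 0 (s - 1) := by
  funext i
  simp only [downAt, blocks]
  split_ifs <;> omega

lemma son_downAt_blocks (hc : 2 ≤ c) (hm : 1 ≤ m) (hright : 1 ≤ r ∨ c = 2 ∧ 1 ≤ s)
    (hP : IsPartition n (blocks c m r s)) : Son n (blocks c m r s) (downAt m (blocks c m r s)) :=
  son_downAt_of_plateau hP hm (fun i hi => by simp only [blocks]; split_ifs <;> omega)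
    (by simp only [blocks]; split_ifs <;> omega) (by simp only [blocks]; split_ifs <;> omega)

lemma Son.eq_downAt_blocks {b : ℕ → ℕ} (hc : 2 ≤ c) (hm : 1 ≤ m)
    (h : Son n (blocks c m r s) b) :
    b = downAt 0 (blocks c m r s) ∨
      ((1 ≤ r ∨ c = 2 ∧ 1 ≤ s) ∧ b = downAt m (blocks c m r s)) := by
  rcases h.eq_downAt with hb | ⟨k, hk, hpl, hdrop, rfl⟩
  · exact Or.inl hb
  · have h0 : blocks c m r s 0 = c := if_pos (by omega)
    rw [h0] at hpl hdrop
    obtain rfl : k = m := by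
      rcases lt_trichotomy k m with hlt | heq | hgt
      · simp only [blocks, if_pos hlt] at hdrop
        omega
      · exact heq
      · have := hpl m hgt
        simp only [blocks] at this
        split_ifs at this <;> omega
    refine Or.inr ⟨?_, rfl⟩
    simp only [blocks] at hdrop
    split_ifs at hdrop <;> omega

lemma joinIrr_downAt_blocks (hc : 2 ≤ c) (hm : 1 ≤ m) (hr : 1 ≤ r → 3 ≤ c)
    (hrs : 1 ≤ r → 1 ≤ s → 4 ≤ c) (hright : 1 ≤ r ∨ c = 2 ∧ 1 ≤ s)
    (hn : c * m + (c - 1) * r + s = n) : JoinIrr (n + 1) (downAt m (blocks c m r s)) := by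
  rcases hright with hr₁ | ⟨rfl, hs⟩
  · obtain ⟨r, rfl⟩ := Nat.exists_eq_add_of_le' hr₁
    rw [downAt_blocks (by omega) hr₁, Nat.add_sub_cancel]
    refine joinIrr_blocks hc (by omega) (fun _ => hr hr₁) (fun _ => hrs hr₁) ?_
    rw [mul_add] at hn ⊢
    omega
  · obtain rfl : r = 0 := by omega
    rw [downAt_blocks_two hs]
    exact joinIrr_blocks le_rfl (by omega) (by omega) (by omega) (by omega)

lemma not_joinIrr_downAt_zero_blocks (hm : 1 ≤ m) (hr : 1 ≤ r → 3 ≤ c)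
    (hright : 1 ≤ r ∨ c = 2 ∧ 1 ≤ s) (hm₂ : r = 0 → 2 ≤ m) :
    ¬ JoinIrr n (downAt 0 (blocks c m r s)) := by
  rcases hright with hr₁ | ⟨rfl, hs⟩
  · intro h
    have := h.apply_zero_le_add_one (p := m) (by simp only [downAt, blocks]; split_ifs <;> omega)
    simp only [downAt, blocks] at this
    split_ifs at this <;> omega
  · obtain rfl : r = 0 := by omega
    rw [downAt_zero_blocks hm]
    exact not_joinIrr_blocks_three le_rfl (by omega) hs

lemma joinIrr_downAt_zero_blocks (hc : 2 ≤ c) (hm : 1 ≤ m) (hright : ¬ (1 ≤ r ∨ c = 2 ∧ 1 ≤ s))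
    (hn : c * m + (c - 1) * r + s = n) : JoinIrr (n + 1) (downAt 0 (blocks c m r s)) := by
  obtain rfl : r = 0 := by omega
  obtain ⟨m, rfl⟩ := Nat.exists_eq_add_of_le' hm
  rw [downAt_zero_blocks hm, Nat.add_sub_cancel]
  refine joinIrr_blocks (by omega) le_rfl (fun _ => by omega) (fun _ _ => by omega) ?_
  rw [mul_add] at hn
  rw [Nat.add_sub_cancel, add_mul]
  omega

end BlocksSons

theorem JoinIrr.existsUnique_son {n : ℕ} {a : ℕ → ℕ} (h : JoinIrr n a) (hne : a ≠ twoOnes n) :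
    ∃! b, Son n a b ∧ JoinIrr (n + 1) b := by
  obtain ⟨c, m, r, s, hc, hm, hr, hrs, hn, rfl⟩ := h.exists_blocks
  by_cases hright : 1 ≤ r ∨ c = 2 ∧ 1 ≤ s
  · have hm₂ : r = 0 → 2 ≤ m := fun hr₀ => by
      by_contra hm₁
      obtain ⟨rfl, rfl, rfl⟩ : c = 2 ∧ m = 1 ∧ r = 0 := by omega
      exact hne (by rw [twoOnes_eq_blocks (by omega)]; congr; omega)
    refine ⟨_, ⟨son_downAt_blocks hc hm hright h.1, joinIrr_downAt_blocks hc hm hr hrs hright hn⟩,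
      fun b ⟨hb, hbJI⟩ => ?_⟩
    rcases hb.eq_downAt_blocks hc hm with rfl | ⟨-, rfl⟩
    · exact absurd hbJI (not_joinIrr_downAt_zero_blocks hm hr hright hm₂)
    · rfl
  · refine ⟨_, ⟨son_downAt_zero h.1, joinIrr_downAt_zero_blocks hc hm hright hn⟩,
      fun b ⟨hb, _⟩ => ?_⟩
    rcases hb.eq_downAt_blocks hc hm with rfl | ⟨hr', -⟩
    · rfl
    · exact absurd hr' hright

/-- For n ≥ 3, every join-irreducible partition of n other than (2,1,…,1) has
exactly one join-irreducible son, while (2,1,…,1) has exactly two. -/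
theorem stmt10 (n : ℕ) (hn : 3 ≤ n) :
    (∀ a, JoinIrr n a → a ≠ twoOnes n →
      ∃! b, Son n a b ∧ JoinIrr (n + 1) b) ∧
    (∃ b c, b ≠ c ∧ Son n (twoOnes n) b ∧ JoinIrr (n + 1) b ∧
      Son n (twoOnes n) c ∧ JoinIrr (n + 1) c ∧
      ∀ d, Son n (twoOnes n) d → JoinIrr (n + 1) d → d = b ∨ d = c) := by
  refine ⟨fun a ha hne => ha.existsUnique_son hne, ?_⟩
  have hright : 1 ≤ 0 ∨ 2 = 2 ∧ 1 ≤ n - 2 := Or.inr ⟨rfl, by omega⟩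
  have hP : IsPartition n (blocks 2 1 0 (n - 2)) := (isPartition_blocks_iff le_rfl).2 (by omega)
  rw [twoOnes_eq_blocks (by omega)]
  refine ⟨_, _, fun he => ?_, son_downAt_zero hP, ?_, son_downAt_blocks le_rfl le_rfl hright hP,
    joinIrr_downAt_blocks le_rfl le_rfl (by omega) (by omega) hright (by omega),
    fun d hd _ => ?_⟩
  · have := congrFun he 0
    simp [downAt, blocks] at this
  · rw [downAt_zero_blocks le_rfl]
    exact joinIrr_blocks (by norm_num) le_rfl (by omega) (by omega) (by omega)
  · rcases hd.eq_downAt_blocks le_rfl le_rfl with h | ⟨-, h⟩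
    exacts [Or.inl h, Or.inr h]
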